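/- arXiv:1101.5332 — 2 statements merged into one kernel-verified Lean document; each statement's English description precedes it below -/
import Mathlib

section
/- Let (X,T,μ) be a measure-preserving dynamical system on a metric space, and let f: X → Y be a measurable map into a metric space (Y,d) on which the α-dimensional Hausdorff measure is σ-finite. Then for μ-almost every x, liminf_{n→∞} n^{1/α} d(f(x), f(T^n x)) < ∞. -/
open MeasureTheory Filter Metric Topology Set
open scoped ENNReal

/-!
Let `S ⊆ Y` have finite `μH[α]`-measure and cover it by sets `E` of small diameter with
`∑ (diam E)^α` bounded independently of the scale. The points of `f⁻¹' E` whose orbit does not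
come back to `f⁻¹' E` before time `C / (diam E)^α` form a set whose first `C / (diam E)^α`
preimages under `T` are disjoint, so it has measure at most `(diam E)^α / C`; over the whole cover
this is `O(1 / C)`. If `n (d(f x, f (Tⁿ x)))^α → ∞` and `f (Tⁿ x) ≠ f x` for all `n ≥ 1`, then the
early returns are bounded away from `f x`, so for fine enough covers `x` lies in this union for
every `C`: such points form a null set. A general point with `liminf = ∞` is sent into it by `Tᵐ`,
where `m` is its last exact return time, and `T`-preimages of null sets are null.
-/

lemma ENNReal.eq_zero_of_forall_natCast_mul_le {a b : ℝ≥0∞} (hb : b ≠ ⊤)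
    (h : ∀ n : ℕ, n * a ≤ b) : a = 0 := by
  by_contra ha
  obtain ⟨n, hn⟩ := ENNReal.exists_nat_mul_gt ha hb
  exact (h n).not_gt hn

lemma ENNReal.tendsto_rpow_of_liminf_eq_top {ι : Type*} {l : Filter ι} [l.NeBot]
    {u : ι → ℝ≥0∞} (hu : liminf u l = ⊤) {α : ℝ} (hα : 0 < α) :
    Tendsto (fun i => u i ^ α) l (𝓝 ⊤) := by
  have hlim : Tendsto u l (𝓝 ⊤) :=
    tendsto_of_liminf_eq_limsup hu (top_unique (hu ▸ liminf_le_limsup))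
  have hcomp := ((ENNReal.continuous_rpow_const (y := α)).tendsto ⊤).comp hlim
  rwa [ENNReal.top_rpow_of_pos hα] at hcomp

lemma ENNReal.ofReal_rpow_one_div_mul_dist_rpow {Y : Type*} [PseudoMetricSpace Y] {α : ℝ}
    (hα : 0 < α) (n : ℕ) (a b : Y) :
    ENNReal.ofReal ((n : ℝ) ^ (1 / α) * dist a b) ^ α = n * edist a b ^ α := by
  rw [ENNReal.ofReal_mul (by positivity), ENNReal.mul_rpow_of_nonneg _ _ hα.le, ← edist_dist,
    ← ENNReal.ofReal_rpow_of_nonneg (Nat.cast_nonneg n) (by positivity), ← ENNReal.rpow_mul,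
    one_div_mul_cancel hα.ne', ENNReal.rpow_one, ENNReal.ofReal_natCast]

section Sequences

variable {Y : Type*} [EMetricSpace Y] {y : ℕ → Y} {α : ℝ}

lemma exists_last_return_of_tendsto (hα : 0 < α)
    (hy : Tendsto (fun n : ℕ => n * edist (y 0) (y n) ^ α) atTop (𝓝 ⊤)) :
    ∃ m, y m = y 0 ∧ (∀ n, 0 < n → y (n + m) ≠ y m) ∧
      Tendsto (fun n : ℕ => n * edist (y m) (y (n + m)) ^ α) atTop (𝓝 ⊤) := by
  classical
  obtain ⟨N, hN⟩ := eventually_atTop.1 (hy.eventually (lt_mem_nhds ENNReal.zero_lt_top))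
  have hfar : ∀ n, N ≤ n → y n ≠ y 0 := fun n hn h => by
    simpa [h, ENNReal.zero_rpow_of_pos hα] using hN n hn
  set m := Nat.findGreatest (fun n => y n = y 0) N
  have hm : y m = y 0 := Nat.findGreatest_spec (P := fun n => y n = y 0) N.zero_le rfl
  refine ⟨m, hm, fun n hn h => ?_, ?_⟩
  · rw [hm] at h
    by_cases hle : n + m ≤ N
    · exact Nat.findGreatest_is_greatest (P := fun n => y n = y 0) (by omega) hle h
    · exact hfar _ (by omega) h
  rw [hm]
  have hshift : Tendsto (fun n : ℕ => ((n + m : ℕ) : ℝ≥0∞) * edist (y 0) (y (n + m)) ^ α / 2)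
      atTop (𝓝 ⊤) := by
    simpa [ENNReal.top_div_of_ne_top] using
      ENNReal.Tendsto.div_const (hy.comp (tendsto_add_atTop_nat m)) (Or.inr two_ne_zero)
  refine tendsto_nhds_top_mono hshift (eventually_atTop.2 ⟨m, fun n hn => ?_⟩)
  refine ENNReal.div_le_of_le_mul ?_
  rw [mul_right_comm]
  gcongr
  exact_mod_cast (by omega : n + m ≤ n * 2)

lemma exists_pos_forall_notMem_of_tendsto (hα : 0 ≤ α) (hne : ∀ n, 0 < n → y n ≠ y 0)
    (hy : Tendsto (fun n : ℕ => n * edist (y 0) (y n) ^ α) atTop (𝓝 ⊤))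
    {C : ℝ≥0∞} (hC : C ≠ ⊤) :
    ∃ r > 0, ∀ E : Set Y, y 0 ∈ E → ediam E ≤ r →
      ∀ n : ℕ, 0 < n → n * ediam E ^ α ≤ C → y n ∉ E := by
  obtain ⟨N, hN⟩ := eventually_atTop.1 (hy.eventually (lt_mem_nhds hC.lt_top))
  have hpos : 0 < (Finset.Ioo 0 N).inf fun n => edist (y 0) (y n) :=
    (Finset.lt_inf_iff ENNReal.zero_lt_top).2 fun n hn =>
      edist_pos.2 (hne n (Finset.mem_Ioo.1 hn).1).symm
  obtain ⟨r, hr0, hr⟩ := exists_between hpos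
  refine ⟨r, hr0, fun E h0 hE n hn hnC hnE => ?_⟩
  have hdist : edist (y 0) (y n) ≤ ediam E := edist_le_ediam_of_mem h0 hnE
  rcases lt_or_ge n N with hnN | hNn
  · exact ((Finset.inf_le (Finset.mem_Ioo.2 ⟨hn, hnN⟩)).trans (hdist.trans hE)).not_gt hr
  · exact (hN n hNn).not_ge (le_trans (by gcongr) hnC)

end Sequences

lemma exists_isClosed_cover_tsum_ediam_rpow_lt {Y : Type*} [EMetricSpace Y] [MeasurableSpace Y]
    [BorelSpace Y] {d : ℝ} (hd : 0 < d) {s : Set Y} {c : ℝ≥0∞} (hc : μH[d] s < c)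
    {r : ℝ≥0∞} (hr : 0 < r) :
    ∃ t : ℕ → Set Y, (∀ i, IsClosed (t i)) ∧ s ⊆ ⋃ i, t i ∧ (∀ i, ediam (t i) ≤ r) ∧
      ∑' i, ediam (t i) ^ d < c := by
  rw [Measure.hausdorffMeasure_apply] at hc
  obtain ⟨t, hst, htr, hsum⟩ : ∃ t : ℕ → Set Y, s ⊆ ⋃ n, t n ∧ (∀ n, ediam (t n) ≤ r) ∧
      ∑' n, ⨆ _ : (t n).Nonempty, ediam (t n) ^ d < c := by
    simpa only [iInf_lt_iff, exists_prop] using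
      (le_iSup₂ (f := fun r (_ : 0 < r) => ⨅ (t : ℕ → Set Y) (_ : s ⊆ ⋃ n, t n)
        (_ : ∀ n, ediam (t n) ≤ r), ∑' n, ⨆ _ : (t n).Nonempty, ediam (t n) ^ d) r hr).trans_lt hc
  refine ⟨fun i => closure (t i), fun i => isClosed_closure,
    hst.trans (iUnion_mono fun i => subset_closure), fun i => (ediam_closure _).trans_le (htr i),
    ?_⟩
  simp only [ediam_closure]
  refine (ENNReal.tsum_le_tsum fun i => ?_).trans_lt hsum
  rcases (t i).eq_empty_or_nonempty with h | h
  · simp [h, ENNReal.zero_rpow_of_pos hd]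
  · exact le_iSup_of_le h le_rfl

theorem MeasureTheory.MeasurePreserving.mul_measure_le_of_forall_not_iterate_mem
    {X : Type*} [MeasurableSpace X] {μ : Measure X} [IsFiniteMeasure μ] {T : X → X}
    (hT : MeasurePreserving T μ μ) {s : Set X} (hs : NullMeasurableSet s μ) {ρ C : ℝ≥0∞}
    (h : ∀ x ∈ s, ∀ n : ℕ, 0 < n → n * ρ ≤ C → T^[n] x ∉ s) :
    C * μ s ≤ ρ * μ univ := by
  classical
  by_cases hN : ∃ N : ℕ, C < N * ρ
  · have hNμ : Nat.find hN * μ s ≤ μ univ := not_lt.1 fun hlt => by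
      obtain ⟨x, hx, n, hn, hnx⟩ := hT.exists_mem_iterate_mem_of_measure_univ_lt_mul_measure hs hlt
      exact h x hx n hn.1 (not_lt.1 (Nat.find_min hN hn.2)) hnx
    calc C * μ s ≤ Nat.find hN * ρ * μ s := by gcongr; exact (Nat.find_spec hN).le
      _ = ρ * (Nat.find hN * μ s) := by ring
      _ ≤ ρ * μ univ := by gcongr
  · simp only [not_exists, not_lt] at hN
    have : μ s = 0 := by
      by_contra h0
      obtain ⟨x, hx, n, hn, hnx⟩ := hT.exists_mem_iterate_mem hs h0
      exact h x hx n (Nat.pos_of_ne_zero hn) (hN n) hnx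
    simp [this]

section LateReturns

variable {X : Type*} [MeasurableSpace X] {T : X → X} {s : Set X}

/-- `n * ρ ≤ C` stands for `n ≤ C / ρ`, avoiding the junk value of `C / 0`. -/
def lateReturnSet (T : X → X) (s : Set X) (ρ C : ℝ≥0∞) : Set X :=
  {x | x ∈ s ∧ ∀ n : ℕ, 0 < n → n * ρ ≤ C → T^[n] x ∉ s}

lemma measurableSet_lateReturnSet (hT : Measurable T) (hs : MeasurableSet s) (ρ C : ℝ≥0∞) :
    MeasurableSet (lateReturnSet T s ρ C) := by
  simp only [lateReturnSet, ofPred_and, ofPred_forall, ofPred_mem_eq]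
  exact hs.inter (.iInter fun n => .iInter fun _ => .iInter fun _ =>
    (hs.preimage (hT.iterate n)).compl)

theorem MeasureTheory.MeasurePreserving.mul_measure_lateReturnSet_le {μ : Measure X}
    [IsFiniteMeasure μ] (hT : MeasurePreserving T μ μ) (hs : MeasurableSet s) (ρ C : ℝ≥0∞) :
    C * μ (lateReturnSet T s ρ C) ≤ ρ * μ univ :=
  hT.mul_measure_le_of_forall_not_iterate_mem
    (measurableSet_lateReturnSet hT.measurable hs ρ C).nullMeasurableSet
    fun _ hx n hn hnC hnx => hx.2 n hn hnC hnx.1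

end LateReturns

section Observations

variable {X Y : Type*} [EMetricSpace Y] {T : X → X} {f : X → Y} {α : ℝ} {S : Set Y}

lemma setOf_tendsto_top_subset_liminf_lateReturnSet {t : ℕ → ℕ → Set Y}
    (ht_cov : ∀ j, S ⊆ ⋃ i, t j i) (ht_diam : ∀ j i, ediam (t j i) ≤ (j : ℝ≥0∞)⁻¹)
    (hα : 0 ≤ α) {C : ℝ≥0∞} (hC : C ≠ ⊤) :
    {x | f x ∈ S ∧ (∀ n, 0 < n → f (T^[n] x) ≠ f x) ∧
        Tendsto (fun n : ℕ => (n : ℝ≥0∞) * edist (f x) (f (T^[n] x)) ^ α) atTop (𝓝 ⊤)} ⊆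
      ⋃ J, ⋂ j ≥ J, ⋃ i, lateReturnSet T (f ⁻¹' t j i) (ediam (t j i) ^ α) C := by
  rintro x ⟨hxS, hne, hlim⟩
  obtain ⟨r, hr, hsmall⟩ :=
    exists_pos_forall_notMem_of_tendsto (y := fun n => f (T^[n] x)) hα hne hlim hC
  obtain ⟨J, hJ⟩ := ENNReal.exists_inv_nat_lt hr.ne'
  refine mem_iUnion.2 ⟨J, mem_iInter₂.2 fun j hj => ?_⟩
  obtain ⟨i, hi⟩ := mem_iUnion.1 (ht_cov j hxS)
  refine mem_iUnion.2 ⟨i, hi, fun n hn hnC hnx => hsmall _ hi ?_ n hn hnC hnx⟩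
  calc ediam (t j i) ≤ (j : ℝ≥0∞)⁻¹ := ht_diam j i
    _ ≤ (J : ℝ≥0∞)⁻¹ := ENNReal.inv_le_inv.2 (by exact_mod_cast hj)
    _ ≤ r := hJ.le

variable [MeasurableSpace X] [MeasurableSpace Y] [BorelSpace Y]

theorem measure_setOf_tendsto_top_eq_zero {μ : Measure X} [IsFiniteMeasure μ]
    (hT : MeasurePreserving T μ μ) (hf : Measurable f) (hα : 0 < α) (hS : μH[α] S ≠ ⊤) :
    μ {x | f x ∈ S ∧ (∀ n, 0 < n → f (T^[n] x) ≠ f x) ∧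
      Tendsto (fun n : ℕ => (n : ℝ≥0∞) * edist (f x) (f (T^[n] x)) ^ α) atTop (𝓝 ⊤)} = 0 := by
  set A := μH[α] S + 1
  choose t ht_closed ht_cov ht_diam ht_sum using fun j : ℕ =>
    exists_isClosed_cover_tsum_ediam_rpow_lt hα (ENNReal.lt_add_right hS one_ne_zero)
      (ENNReal.inv_pos.2 (ENNReal.natCast_ne_top j))
  set L := fun (C : ℕ) j i => lateReturnSet T (f ⁻¹' t j i) (ediam (t j i) ^ α) C
  have hL : ∀ (C : ℕ) j, C * μ (⋃ i, L C j i) ≤ A * μ univ := fun C j =>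
    calc C * μ (⋃ i, L C j i) ≤ C * ∑' i, μ (L C j i) := by gcongr; exact measure_iUnion_le _
      _ = ∑' i, C * μ (L C j i) := ENNReal.tsum_mul_left.symm
      _ ≤ ∑' i, ediam (t j i) ^ α * μ univ := ENNReal.tsum_le_tsum fun i =>
          hT.mul_measure_lateReturnSet_le ((ht_closed j i).measurableSet.preimage hf) _ _
      _ = (∑' i, ediam (t j i) ^ α) * μ univ := ENNReal.tsum_mul_right
      _ ≤ A * μ univ := by gcongr; exact (ht_sum j).le
  refine ENNReal.eq_zero_of_forall_natCast_mul_le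
    (ENNReal.mul_ne_top (ENNReal.add_ne_top.2 ⟨hS, ENNReal.one_ne_top⟩) (measure_ne_top μ univ))
    fun C => ?_
  have hmono : Monotone fun J => ⋂ j ≥ J, ⋃ i, L C j i := fun J J' hJ =>
    biInter_mono (fun j hj => hJ.trans hj) fun _ _ => subset_rfl
  calc _ ≤ C * μ (⋃ J, ⋂ j ≥ J, ⋃ i, L C j i) := by
        gcongr
        exact setOf_tendsto_top_subset_liminf_lateReturnSet ht_cov ht_diam hα.le
          (ENNReal.natCast_ne_top C)
    _ = ⨆ J, C * μ (⋂ j ≥ J, ⋃ i, L C j i) := by rw [hmono.measure_iUnion, ENNReal.mul_iSup]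
    _ ≤ A * μ univ := iSup_le fun J =>
        le_trans (by gcongr; exact biInter_subset_of_mem (le_refl J)) (hL C J)

end Observations

/-- **Boshernitzan's theorem.** If the α-dimensional Hausdorff measure is σ-finite on `Y`,
then for a measure-preserving system `(X, T, μ)` and a measurable observation `f : X → Y`,
for μ-a.e. `x`, `liminf_n n^(1/α) d(f x, f (Tⁿ x)) < ∞`. -/
theorem boshernitzan
    {X : Type*} [MeasurableSpace X]
    {Y : Type*} [MetricSpace Y] [MeasurableSpace Y] [BorelSpace Y]
    (μ : Measure X) [IsProbabilityMeasure μ]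
    (T : X → X) (hT : MeasurePreserving T μ μ)
    (f : X → Y) (hf : Measurable f)
    (α : ℝ) (hα : 0 < α)
    (hY : SigmaFinite (μH[α] : Measure Y)) :
    ∀ᵐ x ∂μ,
      Filter.liminf
        (fun n : ℕ => ENNReal.ofReal ((n : ℝ) ^ (1 / α) * dist (f x) (f (T^[n] x))))
        Filter.atTop < ⊤ := by
  have hS : ∀ k, μH[α] (spanningSets (μH[α] : Measure Y) k) ≠ ⊤ :=
    fun k => (measure_spanningSets_lt_top _ k).ne
  refine ae_iff.2 (measure_mono_null ?_ (measure_iUnion_null fun k => measure_iUnion_null fun m =>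
    (hT.iterate m).quasiMeasurePreserving.preimage_null
      (measure_setOf_tendsto_top_eq_zero hT hf hα (hS k))))
  intro x hx
  have hlim : Tendsto (fun n : ℕ => (n : ℝ≥0∞) * edist (f x) (f (T^[n] x)) ^ α) atTop (𝓝 ⊤) := by
    simpa only [ENNReal.ofReal_rpow_one_div_mul_dist_rpow hα] using
      ENNReal.tendsto_rpow_of_liminf_eq_top (not_lt_top_iff.1 hx) hα
  obtain ⟨m, hm, hmne, hmlim⟩ := exists_last_return_of_tendsto (y := fun n => f (T^[n] x)) hα hlim
  obtain ⟨k, hk⟩ := mem_iUnion.1 ((iUnion_spanningSets (μH[α] : Measure Y)).symm ▸ mem_univ (f x))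
  simp only [mem_iUnion, mem_preimage, mem_ofPred_eq, ← Function.iterate_add_apply]
  exact ⟨k, m, hm ▸ hk, hmne, hmlim⟩
end

section
/- Every Borel probability measure on ℝ^N is weakly diametrically regular: for any η > 1, for μ-almost every x and every ε > 0, there exists δ > 0 such that for all r < δ, μ(B(x, ηr)) ≤ μ(B(x,r)) · r^{-ε}. -/
open MeasureTheory Filter Metric Topology

open scoped ENNReal

/-!
At scale `r`, the points `x` with `μ(B(x, c r)) > r^(-γ) μ(B(x, r))` form a set of measure
`O(r^γ)`: cover it by the balls `B(s, r)` centred at a maximal `r/2`-separated subset. In finite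
dimension a volume-packing argument shows that the enlarged balls `B(s, c r)` overlap at most
`(4c + 1)^N` times, so `∑ μ(B(s, r)) ≤ r^γ ∑ μ(B(s, c r)) ≤ (4c + 1)^N r^γ`. Along the geometric
scales `r = η^(-n)`, with `c = η²`, these bounds are summable, so by Borel–Cantelli almost every
`x` is eventually good; a radius between two consecutive scales is then handled by monotonicity
of `r ↦ μ(B(x, r))`, at the cost of doubling the exponent.
-/

namespace Metric

lemma exists_maximal_isSeparated {X : Type*} [PseudoEMetricSpace X] (ε : ℝ≥0∞) (s : Set X) :
    ∃ N, Maximal (fun N ↦ N ⊆ s ∧ IsSeparated ε N) N :=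
  zorn_subset _ fun c hcs hc ↦
    ⟨⋃₀ c, ⟨Set.sUnion_subset fun _ ht ↦ (hcs ht).1, hc.pairwise_sUnion.2 fun _ ht ↦ (hcs ht).2⟩,
      fun _ ↦ Set.subset_sUnion_of_mem⟩

section PseudoMetricSpace

variable {X : Type*} [PseudoMetricSpace X] {S : Set X} {ρ : ℝ}

lemma IsSeparated.pairwiseDisjoint_ball (hS : IsSeparated (ENNReal.ofReal ρ) S) :
    S.PairwiseDisjoint (ball · (ρ / 2)) := by
  intro a ha b hb hab
  have hρ : ρ < dist a b := by
    have : ENNReal.ofReal ρ < edist a b := hS ha hb hab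
    rw [edist_dist, ENNReal.ofReal_lt_ofReal_iff'] at this
    exact this.1
  exact ball_disjoint_ball (by linarith)

lemma IsSeparated.countable [TopologicalSpace.SeparableSpace X] (hρ : 0 < ρ)
    (hS : IsSeparated (ENNReal.ofReal ρ) S) : S.Countable :=
  hS.pairwiseDisjoint_ball.countable_of_isOpen (fun _ _ ↦ isOpen_ball)
    fun a _ ↦ ⟨a, mem_ball_self (half_pos hρ)⟩

end PseudoMetricSpace

end Metric

open Module

section FiniteDimensional

variable {E : Type*} [NormedAddCommGroup E] [NormedSpace ℝ E] [FiniteDimensional ℝ E]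
  {S : Set E} {ρ c : ℝ}

theorem Metric.IsSeparated.encard_le_of_subset_ball (hρ : 0 < ρ) (hc : 0 ≤ c)
    (hS : IsSeparated (ENNReal.ofReal ρ) S) {x : E} (hSx : S ⊆ ball x (c * ρ)) :
    (S.encard : ℝ≥0∞) ≤ ENNReal.ofReal ((2 * c + 1) ^ finrank ℝ E) := by
  borelize E
  set μ : Measure E := Measure.addHaar
  set v := μ (ball 0 (ρ / 2))
  have hv : v ≠ 0 := (measure_ball_pos μ 0 (half_pos hρ)).ne'
  have hv' : v ≠ ⊤ := measure_ball_lt_top.ne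
  refine (ENNReal.mul_le_mul_iff_left hv hv').1 ?_
  calc (S.encard : ℝ≥0∞) * v = ∑' s : S, μ (ball (s : E) (ρ / 2)) := by
        simp only [Measure.addHaar_ball_center μ _ (ρ / 2), ENNReal.tsum_set_const, v]
    _ = μ (⋃ s ∈ S, ball s (ρ / 2)) :=
        (measure_biUnion (hS.countable hρ) hS.pairwiseDisjoint_ball fun _ _ ↦
          measurableSet_ball).symm
    _ ≤ μ (ball x ((2 * c + 1) * (ρ / 2))) := by
        refine measure_mono (Set.iUnion₂_subset fun s hs ↦ ball_subset_ball' ?_)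
        have := mem_ball.1 (hSx hs)
        linarith
    _ = ENNReal.ofReal ((2 * c + 1) ^ finrank ℝ E) * v :=
        Measure.addHaar_ball_mul_of_pos μ x (by positivity) _

variable [MeasurableSpace E] [BorelSpace E]

theorem Metric.IsSeparated.tsum_measure_ball_le (μ : Measure E) (hρ : 0 < ρ) (hc : 0 ≤ c)
    (hS : IsSeparated (ENNReal.ofReal ρ) S) :
    ∑' s : S, μ (ball (s : E) (c * ρ)) ≤ ENNReal.ofReal ((2 * c + 1) ^ finrank ℝ E) * μ .univ := by
  have : Countable S := (hS.countable hρ).to_subtype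
  have hmult : ∀ x, ∑' s : S, (ball (s : E) (c * ρ)).indicator 1 x
      ≤ ENNReal.ofReal ((2 * c + 1) ^ finrank ℝ E) := by
    intro x
    have hcount : ∑' s : S, (ball (s : E) (c * ρ)).indicator 1 x
        = ((S ∩ ball x (c * ρ)).encard : ℝ≥0∞) := by
      rw [← Subtype.image_preimage_coe, Subtype.val_injective.encard_image,
        ← ENNReal.tsum_set_one, tsum_subtype _ fun _ ↦ (1 : ℝ≥0∞)]
      congr with s
      classical
      simp only [Set.indicator_apply, Set.mem_preimage, Pi.one_apply, mem_ball_comm]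
    rw [hcount]
    exact (hS.subset Set.inter_subset_left).encard_le_of_subset_ball hρ hc Set.inter_subset_right
  calc ∑' s : S, μ (ball (s : E) (c * ρ))
      = ∫⁻ x, ∑' s : S, (ball (s : E) (c * ρ)).indicator 1 x ∂μ := by
        rw [lintegral_tsum fun _ ↦ (measurable_one.indicator measurableSet_ball).aemeasurable]
        simp only [lintegral_indicator_one measurableSet_ball]
    _ ≤ ∫⁻ _, ENNReal.ofReal ((2 * c + 1) ^ finrank ℝ E) ∂μ := lintegral_mono hmult
    _ = _ := lintegral_const _

theorem measure_le_of_measure_closedBall_le (μ : Measure E) (hρ : 0 < ρ) (hc : 0 ≤ c)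
    {A : Set E} {C : ℝ≥0∞} (hA : ∀ x ∈ A, μ (closedBall x ρ) ≤ C * μ (ball x (c * ρ))) :
    μ A ≤ C * ENNReal.ofReal ((2 * c + 1) ^ finrank ℝ E) * μ .univ := by
  obtain ⟨N, hN⟩ := exists_maximal_isSeparated (ENNReal.ofReal ρ) A
  have hcover : A ⊆ ⋃ s ∈ N, closedBall s ρ := by
    simpa [ρ.coe_toNNReal hρ.le] using (IsCover.of_maximal_isSeparated hN).subset_iUnion_closedBall
  calc μ A ≤ ∑' s : N, μ (closedBall (s : E) ρ) :=
        (measure_mono hcover).trans (measure_biUnion_le μ (hN.prop.2.countable hρ) _)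
    _ ≤ ∑' s : N, C * μ (ball (s : E) (c * ρ)) := ENNReal.tsum_le_tsum fun s ↦ hA s (hN.prop.1 s.2)
    _ = C * ∑' s : N, μ (ball (s : E) (c * ρ)) := ENNReal.tsum_mul_left
    _ ≤ C * ENNReal.ofReal ((2 * c + 1) ^ finrank ℝ E) * μ .univ := by
        rw [mul_assoc]
        exact mul_le_mul_right (hN.prop.2.tsum_measure_ball_le μ hρ hc) C

theorem ae_eventually_measure_ball_le (μ : Measure E) [IsFiniteMeasure μ] (hc : 0 ≤ c) {γ : ℝ}
    {r : ℕ → ℝ} (hr : ∀ n, 0 < r n) (hsum : Summable fun n ↦ r n ^ γ) :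
    ∀ᵐ x ∂μ, ∀ᶠ n in atTop,
      μ (ball x (c * r n)) ≤ μ (ball x (r n)) * ENNReal.ofReal (r n ^ (-γ)) := by
  set K := ENNReal.ofReal ((2 * (2 * c) + 1) ^ finrank ℝ E) * μ .univ
  set bad : ℕ → Set E :=
    fun n ↦ {x | μ (ball x (r n)) * ENNReal.ofReal (r n ^ (-γ)) < μ (ball x (c * r n))}
  have hbad : ∀ n, μ (bad n) ≤ ENNReal.ofReal (r n ^ γ) * K := by
    intro n
    rw [← mul_assoc]
    refine measure_le_of_measure_closedBall_le μ (half_pos (hr n)) (by positivity) fun x hx ↦ ?_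
    have hinv : ENNReal.ofReal (r n ^ (-γ)) * ENNReal.ofReal (r n ^ γ) = 1 := by
      rw [← ENNReal.ofReal_mul (Real.rpow_nonneg (hr n).le _), Real.rpow_neg (hr n).le,
        inv_mul_cancel₀ (Real.rpow_pos_of_pos (hr n) γ).ne', ENNReal.ofReal_one]
    calc μ (closedBall x (r n / 2)) ≤ μ (ball x (r n)) :=
          measure_mono (closedBall_subset_ball (half_lt_self (hr n)))
      _ = μ (ball x (r n)) * ENNReal.ofReal (r n ^ (-γ)) * ENNReal.ofReal (r n ^ γ) := by
          rw [mul_assoc, hinv, mul_one]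
      _ ≤ ENNReal.ofReal (r n ^ γ) * μ (ball x (2 * c * (r n / 2))) := by
          rw [mul_comm, show 2 * c * (r n / 2) = c * r n by ring]
          exact mul_le_mul_right hx.le _
  have hsum_bad : ∑' n, μ (bad n) ≠ ⊤ := by
    refine ne_top_of_le_ne_top ?_ (ENNReal.tsum_le_tsum hbad)
    rw [ENNReal.tsum_mul_right,
      ← ENNReal.ofReal_tsum_of_nonneg (fun n ↦ Real.rpow_nonneg (hr n).le _) hsum]
    exact ENNReal.mul_ne_top ENNReal.ofReal_ne_top
      (ENNReal.mul_ne_top ENNReal.ofReal_ne_top (measure_ne_top μ _))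
  filter_upwards [ae_eventually_notMem hsum_bad] with x hx
  filter_upwards [hx] with n hn
  exact not_lt.1 hn

end FiniteDimensional

theorem summable_inv_pow_rpow {η γ : ℝ} (hη : 1 < η) (hγ : 0 < γ) :
    Summable fun n : ℕ ↦ (η ^ n)⁻¹ ^ γ := by
  have hη0 : 0 ≤ η := by linarith
  have hgeom : ∀ n : ℕ, (η ^ n)⁻¹ ^ γ = (η ^ γ)⁻¹ ^ n := by
    intro n
    rw [Real.inv_rpow (by positivity), ← Real.rpow_natCast, ← Real.rpow_mul hη0, mul_comm,
      Real.rpow_mul hη0, Real.rpow_natCast, inv_pow]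
  simp only [hgeom]
  exact summable_geometric_of_lt_one (by positivity)
    (inv_lt_one_of_one_lt₀ (Real.one_lt_rpow hη hγ))

theorem exists_le_mul_rpow_of_eventually_le {F : ℝ → ℝ≥0∞} (hF : Monotone F) {η γ : ℝ}
    (hη : 1 < η) (hγ : 0 ≤ γ)
    (h : ∀ᶠ n : ℕ in atTop,
      F (η ^ 2 * (η ^ n)⁻¹) ≤ F ((η ^ n)⁻¹) * ENNReal.ofReal ((η ^ n)⁻¹ ^ (-γ))) :
    ∃ δ > 0, ∀ r, 0 < r → r < δ → ∀ ε, 2 * γ ≤ ε →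
      F (η * r) ≤ F r * ENNReal.ofReal (r ^ (-ε)) := by
  have hη0 : 0 < η := by linarith
  obtain ⟨n₀, hn₀⟩ := eventually_atTop.1 h
  refine ⟨(η ^ (n₀ + 1))⁻¹, by positivity, fun r hr hrδ ε hε ↦ ?_⟩
  have hδr : η ^ (n₀ + 1) < r⁻¹ := (lt_inv_comm₀ hr (by positivity)).1 hrδ
  obtain ⟨n, hn, hn'⟩ := exists_nat_pow_near (one_le_pow₀ hη.le |>.trans hδr.le) hη
  have hn₀n : n₀ + 1 < n + 1 := (pow_lt_pow_iff_right₀ hη).1 (hδr.trans hn')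
  have hrn : r ≤ (η ^ n)⁻¹ := (le_inv_comm₀ hr (pow_pos hη0 n)).2 hn
  have hrn' : (η ^ (n + 1))⁻¹ ≤ r := (inv_le_comm₀ (pow_pos hη0 (n + 1)) hr).2 hn'.le
  have hexp : (η ^ (n + 1))⁻¹ ^ (-γ) ≤ r ^ (-ε) := by
    have hr1 : 1 ≤ r⁻¹ := (one_le_pow₀ hη.le).trans hn
    calc (η ^ (n + 1))⁻¹ ^ (-γ) = (η ^ (n + 1)) ^ γ := by
          rw [Real.inv_rpow (by positivity), Real.rpow_neg (by positivity), inv_inv]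
      _ ≤ (r⁻¹ ^ 2) ^ γ := by
          refine Real.rpow_le_rpow (by positivity) ?_ hγ
          calc η ^ (n + 1) ≤ η ^ (2 * n) := pow_le_pow_right₀ hη.le (by omega)
            _ = (η ^ n) ^ 2 := by ring
            _ ≤ r⁻¹ ^ 2 := by gcongr
      _ = r⁻¹ ^ (2 * γ) := by
          rw [← Real.rpow_natCast, ← Real.rpow_mul (by positivity), Nat.cast_ofNat]
      _ ≤ r⁻¹ ^ ε := Real.rpow_le_rpow_of_exponent_le hr1 hε
      _ = r ^ (-ε) := by rw [Real.inv_rpow hr.le, Real.rpow_neg hr.le]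
  calc F (η * r) ≤ F (η ^ 2 * (η ^ (n + 1))⁻¹) := by
        refine hF ?_
        calc η * r ≤ η * (η ^ n)⁻¹ := by gcongr
          _ = η ^ 2 * (η ^ (n + 1))⁻¹ := by field_simp; ring
    _ ≤ F ((η ^ (n + 1))⁻¹) * ENNReal.ofReal ((η ^ (n + 1))⁻¹ ^ (-γ)) := hn₀ _ (by omega)
    _ ≤ F r * ENNReal.ofReal (r ^ (-ε)) := mul_le_mul' (hF hrn') (ENNReal.ofReal_le_ofReal hexp)

/-- Every Borel probability measure on `ℝ^N` is weakly diametrically regular: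
for any `η > 1`, for μ-a.e. `x` and every `ε > 0`, there exists `δ > 0` such that
for all `0 < r < δ`, `μ(B(x, ηr)) ≤ μ(B(x, r)) · r^(-ε)`. -/
theorem weakly_diametrically_regular (N : ℕ)
    (μ : Measure (EuclideanSpace ℝ (Fin N))) [IsProbabilityMeasure μ] :
    ∀ η : ℝ, 1 < η →
      ∀ᵐ x ∂μ, ∀ ε : ℝ, 0 < ε → ∃ δ > 0, ∀ r : ℝ, 0 < r → r < δ →
        μ (ball x (η * r)) ≤ μ (ball x r) * ENNReal.ofReal (r ^ (-ε)) := by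
  intro η hη
  have hscale : ∀ k : ℕ, ∀ᵐ x ∂μ, ∃ δ > 0, ∀ r, 0 < r → r < δ →
      ∀ ε : ℝ, 2 * (1 / (k + 1)) ≤ ε →
        μ (ball x (η * r)) ≤ μ (ball x r) * ENNReal.ofReal (r ^ (-ε)) := by
    intro k
    have hγ : (0 : ℝ) < 1 / (k + 1) := by positivity
    filter_upwards [ae_eventually_measure_ball_le μ (sq_nonneg η) (fun n ↦ by positivity)
      (summable_inv_pow_rpow hη hγ)] with x hx
    exact exists_le_mul_rpow_of_eventually_le (fun _ _ h ↦ measure_mono (ball_subset_ball h))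
      hη hγ.le hx
  filter_upwards [ae_all_iff.2 hscale] with x hx ε hε
  obtain ⟨k, hk⟩ := exists_nat_one_div_lt (half_pos hε)
  obtain ⟨δ, hδ, hδx⟩ := hx k
  exact ⟨δ, hδ, fun r hr hrδ ↦ hδx r hr hrδ ε (by linarith)⟩
end
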